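/- arXiv:2004.04839 — 2 statements merged into one kernel-verified Lean document; each statement's English description precedes it below -/
import Mathlib

section
/- (Lemma 1, absorbing boundary condition on the right.) Let b ∈ ℝ and let v : ℝ × ℝ → ℝ be C² on an open set containing the region H = {(x,t) : x ≥ b, t ≥ 0}. Assume that v_tt(x,t) = v_xx(x,t) for all (x,t) ∈ H, and that v(x,0) = 0 and v_t(x,0) = 0 for all x ≥ b. Then for every x₁ ≥ b and every t ≥ 0 one has v_x(x₁,t) + v_t(x₁,t) = 0. -/
/-!
Along each characteristic x + t = c the quantity w = v_x + v_t satisfies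
d/ds w(c - s, s) = v_tt - v_xx + v_xt - v_tx = 0, by the wave equation and the symmetry of
the second derivative. Hence w(x₁, t) = w(x₁ + t, 0), which vanishes because the Cauchy data
vanish on [b, ∞) (at x = b one differentiates from the right only).
-/

open Set

/-- Partial derivative in the first variable. -/
noncomputable def partialX (f : ℝ × ℝ → ℝ) : ℝ × ℝ → ℝ :=
  fun p => deriv (fun x => f (x, p.2)) p.1

/-- Partial derivative in the second variable. -/
noncomputable def partialT (f : ℝ × ℝ → ℝ) : ℝ × ℝ → ℝ :=
  fun p => deriv (fun t => f (p.1, t)) p.2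

open Filter Topology

lemma HasDerivAt.eq_zero_of_eqOn_Ici {F : Type*} [NormedAddCommGroup F] [NormedSpace ℝ F]
    {f : ℝ → F} {f' : F} {a : ℝ} (hf : HasDerivAt f f' a) (h : EqOn f (fun _ => f a) (Ici a)) :
    f' = 0 :=
  (uniqueDiffWithinAt_Ici a).eq_deriv _ hf.hasDerivWithinAt
    ((hasDerivWithinAt_const a _ (f a)).congr h (h self_mem_Ici))

lemma ContinuousLinearMap.apply_sub_apply_add_of_symm {E F : Type*} [NormedAddCommGroup E]
    [NormedSpace ℝ E] [NormedAddCommGroup F] [NormedSpace ℝ F] (D : E →L[ℝ] E →L[ℝ] F)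
    {a b : E} (hsymm : D a b = D b a) : D (a - b) (a + b) = D a a - D b b := by
  simp only [map_sub, map_add, sub_apply, hsymm]
  abel

section SecondDerivative

variable {E F : Type*} [NormedAddCommGroup E] [NormedSpace ℝ E] [NormedAddCommGroup F]
  [NormedSpace ℝ F]

lemma HasDerivAt.fderiv_apply_comp {f : E → F} {γ : ℝ → E} {c : E} {s : ℝ}
    (hγ : HasDerivAt γ c s) (hf : DifferentiableAt ℝ (fderiv ℝ f) (γ s)) (a : E) :
    HasDerivAt (fun s => fderiv ℝ f (γ s) a) (fderiv ℝ (fderiv ℝ f) (γ s) c a) s :=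
  (ContinuousLinearMap.apply ℝ F a).hasFDerivAt.comp_hasDerivAt s
    (hf.hasFDerivAt.comp_hasDerivAt s hγ)

lemma ContDiffAt.differentiableAt_fderiv {f : E → F} {p : E} (hf : ContDiffAt ℝ 2 f p) :
    DifferentiableAt ℝ (fderiv ℝ f) p :=
  (hf.fderiv_right (m := 1) le_rfl).differentiableAt one_ne_zero

lemma ContDiffAt.eventually_differentiableAt {f : E → F} {p : E} (hf : ContDiffAt ℝ 2 f p) :
    ∀ᶠ q in 𝓝 p, DifferentiableAt ℝ f q :=
  (hf.eventually (by simp)).mono fun _ hq => hq.differentiableAt two_ne_zero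

end SecondDerivative

section Partials

variable {v : ℝ × ℝ → ℝ} {p : ℝ × ℝ}

lemma hasDerivAt_line_fst (p : ℝ × ℝ) : HasDerivAt (fun x : ℝ => (x, p.2)) ((1, 0) : ℝ × ℝ) p.1 :=
  (hasDerivAt_id _).prodMk (hasDerivAt_const _ _)

lemma hasDerivAt_line_snd (p : ℝ × ℝ) : HasDerivAt (fun t : ℝ => (p.1, t)) ((0, 1) : ℝ × ℝ) p.2 :=
  (hasDerivAt_const _ _).prodMk (hasDerivAt_id _)

lemma partialX_eq_fderiv (hv : DifferentiableAt ℝ v p) : partialX v p = fderiv ℝ v p (1, 0) :=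
  (hv.hasFDerivAt.comp_hasDerivAt p.1 (hasDerivAt_line_fst p)).deriv

lemma partialT_eq_fderiv (hv : DifferentiableAt ℝ v p) : partialT v p = fderiv ℝ v p (0, 1) :=
  (hv.hasFDerivAt.comp_hasDerivAt p.2 (hasDerivAt_line_snd p)).deriv

lemma partialX_partialX_eq_fderiv_fderiv (hv : ContDiffAt ℝ 2 v p) :
    partialX (partialX v) p = fderiv ℝ (fderiv ℝ v) p (1, 0) (1, 0) := by
  have hline := hasDerivAt_line_fst p
  have heq : (fun x => partialX v (x, p.2)) =ᶠ[𝓝 p.1] fun x => fderiv ℝ v (x, p.2) (1, 0) :=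
    (hline.continuousAt.tendsto.eventually hv.eventually_differentiableAt).mono
      fun _ hx => partialX_eq_fderiv hx
  exact heq.deriv_eq.trans (hline.fderiv_apply_comp hv.differentiableAt_fderiv _).deriv

lemma partialT_partialT_eq_fderiv_fderiv (hv : ContDiffAt ℝ 2 v p) :
    partialT (partialT v) p = fderiv ℝ (fderiv ℝ v) p (0, 1) (0, 1) := by
  have hline := hasDerivAt_line_snd p
  have heq : (fun t => partialT v (p.1, t)) =ᶠ[𝓝 p.2] fun t => fderiv ℝ v (p.1, t) (0, 1) :=
    (hline.continuousAt.tendsto.eventually hv.eventually_differentiableAt).mono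
      fun _ ht => partialT_eq_fderiv ht
  exact heq.deriv_eq.trans (hline.fderiv_apply_comp hv.differentiableAt_fderiv _).deriv

lemma partialX_add_partialT_eq_fderiv (hv : DifferentiableAt ℝ v p) :
    partialX v p + partialT v p = fderiv ℝ v p (1, 1) := by
  rw [partialX_eq_fderiv hv, partialT_eq_fderiv hv, ← map_add, Prod.mk_add_mk, zero_add, add_zero]

lemma partialX_eq_zero_of_eqOn_Ici (hv : DifferentiableAt ℝ v p)
    (h : ∀ y, p.1 ≤ y → v (y, p.2) = v p) : partialX v p = 0 := by
  have hd := hv.hasFDerivAt.comp_hasDerivAt p.1 (hasDerivAt_line_fst p)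
  exact hd.deriv.trans (hd.eq_zero_of_eqOn_Ici fun y hy => h y hy)

end Partials

lemma fderiv_apply_one_one_eq_along_characteristic {v : ℝ × ℝ → ℝ} {c t : ℝ} (ht : 0 ≤ t)
    (hv : ∀ s ∈ Icc 0 t, ContDiffAt ℝ 2 v (c - s, s))
    (hwave : ∀ s ∈ Icc 0 t, partialT (partialT v) (c - s, s) = partialX (partialX v) (c - s, s)) :
    fderiv ℝ v (c - t, t) (1, 1) = fderiv ℝ v (c, 0) (1, 1) := by
  have hγ : ∀ s, HasDerivAt (fun s : ℝ => (c - s, s)) ((-1, 1) : ℝ × ℝ) s := fun s =>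
    ((hasDerivAt_id s).const_sub c).prodMk (hasDerivAt_id s)
  have hderiv : ∀ s ∈ Icc 0 t, HasDerivAt (fun s => fderiv ℝ v (c - s, s) (1, 1)) 0 s := by
    intro s hs
    set D := fderiv ℝ (fderiv ℝ v) (c - s, s)
    have hD : HasDerivAt (fun s => fderiv ℝ v (c - s, s) (1, 1)) (D (-1, 1) (1, 1)) s :=
      (hγ s).fderiv_apply_comp (hv s hs).differentiableAt_fderiv (1, 1)
    have hsymm : D (0, 1) (1, 0) = D (1, 0) (0, 1) :=
      (hv s hs).isSymmSndFDerivAt (by simp) (0, 1) (1, 0)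
    have hpolar : D (-1, 1) (1, 1) = D (0, 1) (0, 1) - D (1, 0) (1, 0) := by
      simpa using D.apply_sub_apply_add_of_symm hsymm
    refine hD.congr_deriv ?_
    rw [hpolar, ← partialT_partialT_eq_fderiv_fderiv (hv s hs),
      ← partialX_partialX_eq_fderiv_fderiv (hv s hs), hwave s hs, sub_self]
  simpa using constant_of_has_deriv_right_zero
    (fun s hs => (hderiv s hs).continuousAt.continuousWithinAt)
    (fun s hs => (hderiv s (Ico_subset_Icc_self hs)).hasDerivWithinAt) t (right_mem_Icc.2 ht)

/-- Lemma 1 (absorbing boundary condition on the right). -/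
theorem absorbing_boundary_right (b : ℝ) (v : ℝ × ℝ → ℝ)
    (hreg : ∃ U : Set (ℝ × ℝ), IsOpen U ∧ {p : ℝ × ℝ | b ≤ p.1 ∧ 0 ≤ p.2} ⊆ U ∧
      ContDiffOn ℝ 2 v U)
    (hwave : ∀ p : ℝ × ℝ, b ≤ p.1 → 0 ≤ p.2 →
      partialT (partialT v) p = partialX (partialX v) p)
    (hinit : ∀ x : ℝ, b ≤ x → v (x, 0) = 0 ∧ partialT v (x, 0) = 0) :
    ∀ x₁ : ℝ, b ≤ x₁ → ∀ t : ℝ, 0 ≤ t →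
      partialX v (x₁, t) + partialT v (x₁, t) = 0 := by
  obtain ⟨U, hUo, hHU, hC2⟩ := hreg
  have hv : ∀ p : ℝ × ℝ, b ≤ p.1 → 0 ≤ p.2 → ContDiffAt ℝ 2 v p := fun p h1 h2 =>
    hC2.contDiffAt (hUo.mem_nhds (hHU ⟨h1, h2⟩))
  have hsum : ∀ p : ℝ × ℝ, b ≤ p.1 → 0 ≤ p.2 →
      partialX v p + partialT v p = fderiv ℝ v p (1, 1) := fun p h1 h2 =>
    partialX_add_partialT_eq_fderiv ((hv p h1 h2).differentiableAt two_ne_zero)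
  intro x₁ hx₁ t ht
  have hc : b ≤ x₁ + t := by linarith
  have hX0 : partialX v (x₁ + t, 0) = 0 :=
    partialX_eq_zero_of_eqOn_Ici ((hv _ hc le_rfl).differentiableAt two_ne_zero)
      fun y hy => by rw [(hinit y (hc.trans hy)).1, (hinit _ hc).1]
  calc partialX v (x₁, t) + partialT v (x₁, t) = fderiv ℝ v (x₁ + t - t, t) (1, 1) := by
        rw [add_sub_cancel_right]; exact hsum _ hx₁ ht
    _ = fderiv ℝ v (x₁ + t, 0) (1, 1) := by
        refine fderiv_apply_one_one_eq_along_characteristic ht (fun s hs => hv _ ?_ hs.1)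
          (fun s hs => hwave _ ?_ hs.1) <;> dsimp only <;> linarith [hs.2]
    _ = partialX v (x₁ + t, 0) + partialT v (x₁ + t, 0) := (hsum _ hc le_rfl).symm
    _ = 0 := by rw [hX0, (hinit _ hc).2, add_zero]
end

section
/- (Lemma 1, absorbing boundary condition on the left.) Let x₀ ∈ ℝ and let v : ℝ × ℝ → ℝ be C² on an open set containing the region H = {(x,t) : x ≤ x₀, t ≥ 0}. Assume that v_tt(x,t) = v_xx(x,t) for all (x,t) ∈ H, and that v(x,0) = 0 and v_t(x,0) = 0 for all x ≤ x₀. Then for every x₂ ≤ x₀ and every t ≥ 0 one has v_x(x₂,t) − v_t(x₂,t) = 0. -/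
open Set

/-! The operator `∂_t² - ∂_x²` factors as `(∂_t + ∂_x)(∂_t - ∂_x)` once the mixed partials of `v`
commute, so along each characteristic `s ↦ (a + s, s)` the quantity `v_t - v_x` has derivative
`v_tt - v_xx`, which vanishes in the region where `v` solves the wave equation. Following the
characteristic through `(x₂, t)` back to `t = 0`, where the vanishing Cauchy data force
`v_t = v_x = 0`, gives `v_x - v_t = 0` at `(x₂, t)`. -/

open Filter Topology

lemma deriv_eq_zero_of_eqOn_Iic {F : Type*} [NormedAddCommGroup F] [NormedSpace ℝ F]
    {f : ℝ → F} {a : ℝ} (hf : DifferentiableAt ℝ f a)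
    (hzero : EqOn f 0 (Iic a)) : deriv f a = 0 := by
  have hu : UniqueDiffWithinAt ℝ (Iic a) a := uniqueDiffOn_Iic a a self_mem_Iic
  have hconst : HasDerivWithinAt f 0 (Iic a) a :=
    (hasDerivWithinAt_const a _ (0 : F)).congr hzero (hzero self_mem_Iic)
  rw [← hf.hasDerivAt.hasDerivWithinAt.derivWithin hu, hconst.derivWithin hu]

lemma ContinuousLinearMap.add_apply_sub_of_symm {𝕜 E F : Type*} [NontriviallyNormedField 𝕜]
    [NormedAddCommGroup E] [NormedSpace 𝕜 E] [NormedAddCommGroup F] [NormedSpace 𝕜 F]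
    (B : E →L[𝕜] E →L[𝕜] F) {a b : E} (hab : B a b = B b a) :
    B (a + b) b - B (a + b) a = B b b - B a a := by
  simp only [map_add, add_apply, hab]
  abel

section PartialDerivatives

variable {f : ℝ × ℝ → ℝ} {f' : ℝ × ℝ → ℝ × ℝ →L[ℝ] ℝ} {f'' : ℝ × ℝ →L[ℝ] ℝ × ℝ →L[ℝ] ℝ}
  {p : ℝ × ℝ}

lemma HasFDerivAt.comp_hasDerivAt_apply {c : ℝ → ℝ × ℝ} {a : ℝ} {w : ℝ × ℝ}
    (hf' : HasFDerivAt f' f'' (c a)) (hc : HasDerivAt c w a) (u : ℝ × ℝ) :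
    HasDerivAt (fun s => f' (c s) u) (f'' w u) a := by
  simpa using (hf'.comp_hasDerivAt a hc).clm_apply (hasDerivAt_const a u)

lemma hasDerivAt_prodMk_left (x t : ℝ) : HasDerivAt (fun x : ℝ => (x, t)) (1, 0) x :=
  (hasDerivAt_id x).prodMk (hasDerivAt_const x t)

lemma hasDerivAt_prodMk_right (x t : ℝ) : HasDerivAt (fun t : ℝ => (x, t)) (0, 1) t :=
  (hasDerivAt_const t x).prodMk (hasDerivAt_id t)

lemma HasFDerivAt.partialX_eq {L : ℝ × ℝ →L[ℝ] ℝ} (hf : HasFDerivAt f L p) :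
    partialX f p = L (1, 0) :=
  (hf.comp_hasDerivAt p.1 (hasDerivAt_prodMk_left p.1 p.2)).deriv

lemma HasFDerivAt.partialT_eq {L : ℝ × ℝ →L[ℝ] ℝ} (hf : HasFDerivAt f L p) :
    partialT f p = L (0, 1) :=
  (hf.comp_hasDerivAt p.2 (hasDerivAt_prodMk_right p.1 p.2)).deriv

lemma partialX_partialX_eq (hf : ∀ᶠ q in 𝓝 p, HasFDerivAt f (f' q) q)
    (hf' : HasFDerivAt f' f'' p) : partialX (partialX f) p = f'' (1, 0) (1, 0) := by
  have hline : ∀ᶠ x in 𝓝 p.1, HasFDerivAt f (f' (x, p.2)) (x, p.2) :=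
    (hasDerivAt_prodMk_left p.1 p.2).continuousAt.eventually hf
  have heq : (fun x => partialX f (x, p.2)) =ᶠ[𝓝 p.1] fun x => f' (x, p.2) (1, 0) :=
    hline.mono fun _ hx => hx.partialX_eq
  exact heq.deriv_eq.trans (hf'.comp_hasDerivAt_apply (hasDerivAt_prodMk_left p.1 p.2) _).deriv

lemma partialT_partialT_eq (hf : ∀ᶠ q in 𝓝 p, HasFDerivAt f (f' q) q)
    (hf' : HasFDerivAt f' f'' p) : partialT (partialT f) p = f'' (0, 1) (0, 1) := by
  have hline : ∀ᶠ t in 𝓝 p.2, HasFDerivAt f (f' (p.1, t)) (p.1, t) :=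
    (hasDerivAt_prodMk_right p.1 p.2).continuousAt.eventually hf
  have heq : (fun t => partialT f (p.1, t)) =ᶠ[𝓝 p.2] fun t => f' (p.1, t) (0, 1) :=
    hline.mono fun _ hx => hx.partialT_eq
  exact heq.deriv_eq.trans (hf'.comp_hasDerivAt_apply (hasDerivAt_prodMk_right p.1 p.2) _).deriv

end PartialDerivatives

lemma hasDerivAt_partialT_sub_partialX_characteristic {U : Set (ℝ × ℝ)} {v : ℝ × ℝ → ℝ}
    (hU : IsOpen U) (hv : ContDiffOn ℝ 2 v U) {a s : ℝ} (hs : (a + s, s) ∈ U) :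
    HasDerivAt (fun s => partialT v (a + s, s) - partialX v (a + s, s))
      (partialT (partialT v) (a + s, s) - partialX (partialX v) (a + s, s)) s := by
  set F := fderiv ℝ v
  have hvF : ∀ᶠ q in 𝓝 (a + s, s), HasFDerivAt v (F q) q :=
    eventually_of_mem (hU.mem_nhds hs) fun q hq =>
      ((hv.differentiableOn (by norm_num)).differentiableAt (hU.mem_nhds hq)).hasFDerivAt
  have hF : HasFDerivAt F (fderiv ℝ F (a + s, s)) (a + s, s) :=
    (((hv.fderiv_of_isOpen (m := 1) hU (by norm_num)).differentiableOn one_ne_zero).differentiableAt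
      (hU.mem_nhds hs)).hasFDerivAt
  have hc : HasDerivAt (fun s => (a + s, s)) ((1, 0) + (0, 1)) s := by
    simpa using ((hasDerivAt_id s).const_add a).prodMk (hasDerivAt_id s)
  have heq : (fun s => F (a + s, s) (0, 1) - F (a + s, s) (1, 0)) =ᶠ[𝓝 s]
      fun s => partialT v (a + s, s) - partialX v (a + s, s) :=
    (hc.continuousAt.eventually hvF).mono fun _ h => by dsimp only; rw [h.partialT_eq, h.partialX_eq]
  rw [partialT_partialT_eq hvF hF, partialX_partialX_eq hvF hF,
    ← (fderiv ℝ F (a + s, s)).add_apply_sub_of_symm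
      (second_derivative_symmetric_of_eventually hvF hF _ _)]
  exact ((hF.comp_hasDerivAt_apply (c := fun s => (a + s, s)) hc _).sub
    (hF.comp_hasDerivAt_apply (c := fun s => (a + s, s)) hc _)).congr_of_eventuallyEq heq.symm

/-- Lemma 1 (absorbing boundary condition on the left). -/
theorem absorbing_boundary_left (x₀ : ℝ) (v : ℝ × ℝ → ℝ)
    (hreg : ∃ U : Set (ℝ × ℝ), IsOpen U ∧ {p : ℝ × ℝ | p.1 ≤ x₀ ∧ 0 ≤ p.2} ⊆ U ∧
      ContDiffOn ℝ 2 v U)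
    (hwave : ∀ p : ℝ × ℝ, p.1 ≤ x₀ → 0 ≤ p.2 →
      partialT (partialT v) p = partialX (partialX v) p)
    (hinit : ∀ x : ℝ, x ≤ x₀ → v (x, 0) = 0 ∧ partialT v (x, 0) = 0) :
    ∀ x₂ : ℝ, x₂ ≤ x₀ → ∀ t : ℝ, 0 ≤ t →
      partialX v (x₂, t) - partialT v (x₂, t) = 0 := by
  obtain ⟨U, hU, hHU, hv⟩ := hreg
  intro x₂ hx₂ t ht
  set g := fun s => partialT v (x₂ - t + s, s) - partialX v (x₂ - t + s, s)
  have hmem : ∀ s ∈ Icc 0 t, x₂ - t + s ≤ x₀ ∧ 0 ≤ s := fun s hs => ⟨by linarith [hs.2], hs.1⟩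
  have hg' : ∀ s ∈ Icc 0 t, HasDerivAt g 0 s := fun s hs => by
    simpa [hwave (x₂ - t + s, s) (hmem s hs).1 (hmem s hs).2] using
      hasDerivAt_partialT_sub_partialX_characteristic hU hv (hHU (hmem s hs))
  have hg0 : g 0 = 0 := by
    have hdiff : DifferentiableAt ℝ (fun x => v (x, 0)) (x₂ - t) :=
      ((hv.differentiableOn (by norm_num)).differentiableAt
        (hU.mem_nhds (hHU ⟨by linarith, le_rfl⟩))).comp _
        (differentiableAt_id.prodMk (differentiableAt_const _))
    have hx : partialX v (x₂ - t, 0) = 0 :=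
      deriv_eq_zero_of_eqOn_Iic hdiff fun x hx => (hinit x (by linarith [mem_Iic.1 hx])).1
    simp [g, hx, (hinit (x₂ - t) (by linarith)).2]
  have hconst : g t = g 0 :=
    constant_of_has_deriv_right_zero (fun s hs => (hg' s hs).continuousAt.continuousWithinAt)
      (fun s hs => (hg' s (Ico_subset_Icc_self hs)).hasDerivWithinAt) t (right_mem_Icc.2 ht)
  have hgt : g t = partialT v (x₂, t) - partialX v (x₂, t) := by simp [g]
  linarith
end
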